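/- arXiv:1603.07256 — 3 statements merged into one kernel-verified Lean document; each statement's English description precedes it below -/
import Mathlib

section
/- Implication between negation-free CNF formulas has a combinatorial characterization: for CNF formulas F and G represented as sets of clauses (sets of atomic propositions), F implies G if and only if there exists a function j : G → F such that j(H) ⊆ H for every clause H ∈ G. -/
/-- Satisfaction of a negation-free CNF formula (a set of clauses, each a set
of atomic propositions) under a truth assignment. -/
def satCNF {P : Type} (ν : P → Prop) (F : Finset (Finset P)) : Prop :=
  ∀ K ∈ F, ∃ p ∈ K, ν p

/-- Implication between negation-free CNF formulas is characterized by clause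
embedding: `F ⟹ G` iff there is `j : G → F` with `j(H) ⊆ H` for all `H ∈ G`. -/
theorem cnf_implication_characterization {P : Type} (F G : Finset (Finset P)) :
    (∀ ν : P → Prop, satCNF ν F → satCNF ν G) ↔
    ∃ j : (H : Finset P) → H ∈ G → Finset P,
      ∀ (H : Finset P) (h : H ∈ G), j H h ∈ F ∧ j H h ⊆ H := by
  constructor
  · intro himp
    have key : ∀ H ∈ G, ∃ K ∈ F, K ⊆ H := by
      intro H hH
      by_contra hcon
      push_neg at hcon
      have hsat : satCNF (fun p => p ∉ H) F := by
        intro K hK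
        obtain ⟨p, hp, hpn⟩ := Finset.not_subset.mp (hcon K hK)
        exact ⟨p, hp, hpn⟩
      obtain ⟨p, hp, hpn⟩ := himp _ hsat H hH
      exact hpn hp
    exact ⟨fun H h => (key H h).choose, fun H h => (key H h).choose_spec⟩
  · rintro ⟨j, hj⟩ ν hF H hH
    obtain ⟨hjF, hjs⟩ := hj H hH
    obtain ⟨p, hp, hν⟩ := hF _ hjF
    exact ⟨p, hjs hp, hν⟩
end

section
/- Relational composition of CNF formulas over boxes has the closed form: F;G is logically equivalent to the set of clauses { ⋃_{ρ ∈ K} ρ;z(ρ) | K ∈ F, z : K → G }, where the union is over choices of a clause K of F and a map z assigning to each box of K a clause of G, and ρ;H denotes {ρ;τ | τ ∈ H}. -/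
/-- Negation-free Boolean formulas over boxes `B` (with `tru` for the empty
conjunction and `fls` for the empty disjunction). -/
inductive Formula (B : Type) : Type where
  | fls : Formula B
  | tru : Formula B
  | box : B → Formula B
  | and : Formula B → Formula B → Formula B
  | or : Formula B → Formula B → Formula B

namespace Formula

variable {B : Type}

/-- Satisfaction under a truth assignment to the boxes. -/
def sat (ν : B → Prop) : Formula B → Prop
  | fls => False
  | tru => True
  | box b => ν b
  | and F G => F.sat ν ∧ G.sat ν
  | or F G => F.sat ν ∨ G.sat ν

/-- Composition of a box with a formula: `ρ;(G₁⋆G₂) = ρ;G₁ ⋆ ρ;G₂`, `ρ;τ`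
composition of boxes, `ρ;false = false`. -/
def boxSeq [Mul B] (r : B) : Formula B → Formula B
  | fls => fls
  | tru => tru
  | box t => box (r * t)
  | and G1 G2 => and (boxSeq r G1) (boxSeq r G2)
  | or G1 G2 => or (boxSeq r G1) (boxSeq r G2)

/-- Relational composition of formulas: `false;G = false`, it distributes over
`∧` and `∨` on the left, and a box distributes over `∧` and `∨` on the right. -/
def seq [Mul B] : Formula B → Formula B → Formula B
  | fls, _ => fls
  | tru, _ => tru
  | box r, G => boxSeq r G
  | and F1 F2, G => and (F1.seq G) (F2.seq G)
  | or F1 F2, G => or (F1.seq G) (F2.seq G)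

end Formula

/-- The disjunction of a clause (a finite set of boxes). -/
noncomputable def clauseFormula {B : Type} (K : Finset B) : Formula B :=
  K.toList.foldr (fun b acc => Formula.or (Formula.box b) acc) Formula.fls

/-- The formula of a CNF given as a finite set of clauses. -/
noncomputable def cnfFormula {B : Type} (F : Finset (Finset B)) : Formula B :=
  F.toList.foldr (fun K acc => Formula.and (clauseFormula K) acc) Formula.tru

/-- The closed-form set of clauses for the relational composition `F;G`:
clauses `⋃_{ρ ∈ K} ρ;z(ρ)` for `K ∈ F` and `z` mapping each box of `K` to a
clause of `G`. -/
def closedComp {B : Type} [Mul B] [DecidableEq B] (F G : Finset (Finset B)) :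
    Set (Finset B) :=
  {C | ∃ K ∈ F, ∃ z : B → Finset B, (∀ ρ ∈ K, z ρ ∈ G) ∧
        C = K.biUnion fun ρ => (z ρ).image fun τ => ρ * τ}

/-- Satisfaction of a (possibly infinite) set of clauses. -/
def satClauses {B : Type} (ν : B → Prop) (S : Set (Finset B)) : Prop :=
  ∀ K ∈ S, ∃ b ∈ K, ν b


open Formula in
lemma sat_boxSeq {B : Type} [Mul B] (ν : B → Prop) (r : B) :
    ∀ H : Formula B, sat ν (boxSeq r H) ↔ sat (fun t => ν (r * t)) H := by
  intro H
  induction H with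
  | fls => simp [boxSeq, sat]
  | tru => simp [boxSeq, sat]
  | box t => simp [boxSeq, sat]
  | and G1 G2 ih1 ih2 => simp [boxSeq, sat, ih1, ih2]
  | or G1 G2 ih1 ih2 => simp [boxSeq, sat, ih1, ih2]

open Formula in
lemma sat_clause_list {B : Type} (ν : B → Prop) (l : List B) :
    sat ν (l.foldr (fun b acc => Formula.or (Formula.box b) acc) Formula.fls)
      ↔ ∃ b ∈ l, ν b := by
  induction l with
  | nil => simp [sat]
  | cons a l ih => simp [sat, ih]

open Formula in
lemma sat_clauseFormula {B : Type} (ν : B → Prop) (K : Finset B) :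
    sat ν (clauseFormula K) ↔ ∃ b ∈ K, ν b := by
  simpa [clauseFormula] using sat_clause_list ν K.toList

open Formula in
lemma seq_clause_list {B : Type} [Mul B] (ν : B → Prop) (l : List B)
    (H : Formula B) :
    sat ν (Formula.seq
      (l.foldr (fun b acc => Formula.or (Formula.box b) acc) Formula.fls) H)
      ↔ ∃ r ∈ l, sat ν (boxSeq r H) := by
  induction l with
  | nil => simp [Formula.seq, sat]
  | cons a l ih => simp [Formula.seq, sat, ih]

open Formula in
lemma seq_cnf_list {B : Type} [Mul B] (ν : B → Prop) (l : List (Finset B))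
    (H : Formula B) :
    sat ν (Formula.seq
      (l.foldr (fun K acc => Formula.and (clauseFormula K) acc) Formula.tru) H)
      ↔ ∀ K ∈ l, sat ν (Formula.seq (clauseFormula K) H) := by
  induction l with
  | nil => simp [Formula.seq, sat]
  | cons a l ih => simp [Formula.seq, sat, ih]

open Formula in
lemma sat_seq_cnf {B : Type} [Mul B] (ν : B → Prop) (F : Finset (Finset B))
    (H : Formula B) :
    sat ν (Formula.seq (cnfFormula F) H)
      ↔ ∀ K ∈ F, ∃ r ∈ K, sat ν (boxSeq r H) := by
  rw [cnfFormula, seq_cnf_list]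
  constructor
  · intro h K hK
    have := h K (by simpa using hK)
    rw [clauseFormula, seq_clause_list] at this
    simpa using this
  · intro h K hK
    rw [clauseFormula, seq_clause_list]
    simpa using h K (by simpa using hK)

open Formula in
lemma sat_cnf_list {B : Type} (ν : B → Prop) (l : List (Finset B)) :
    sat ν (l.foldr (fun K acc => Formula.and (clauseFormula K) acc) Formula.tru)
      ↔ ∀ K ∈ l, sat ν (clauseFormula K) := by
  induction l with
  | nil => simp [sat]
  | cons a l ih => simp [sat, ih]

/-- Closed form for the relational composition of CNF formulas over boxes:
`F;G` is logically equivalent to `{⋃_{ρ ∈ K} ρ;z(ρ) | K ∈ F, z : K → G}`. -/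
theorem cnf_seq_closed_form {B : Type} [Mul B] [DecidableEq B]
    (F G : Finset (Finset B)) :
    ∀ ν : B → Prop,
      Formula.sat ν (Formula.seq (cnfFormula F) (cnfFormula G)) ↔
        satClauses ν (closedComp F G) := by
  intro ν
  rw [sat_seq_cnf]
  constructor
  · -- forward
    intro h C hC
    obtain ⟨K, hK, z, hz, rfl⟩ := hC
    obtain ⟨r, hr, hsat⟩ := h K hK
    rw [sat_boxSeq, cnfFormula, sat_cnf_list] at hsat
    have := hsat (z r) (by simpa using hz r hr)
    rw [sat_clauseFormula] at this
    obtain ⟨t, ht, hνt⟩ := this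
    exact ⟨r * t, Finset.mem_biUnion.2 ⟨r, hr, Finset.mem_image.2 ⟨t, ht, rfl⟩⟩, hνt⟩
  · -- backward
    intro h K hK
    by_contra hcon
    push_neg at hcon
    -- for every r ∈ K, there is a clause L ∈ G with no satisfied composite
    have key : ∀ r ∈ K, ∃ L ∈ G, ∀ t ∈ L, ¬ ν (r * t) := by
      intro r hr
      have := hcon r hr
      rw [sat_boxSeq, cnfFormula, sat_cnf_list] at this
      push_neg at this
      obtain ⟨L, hL, hLsat⟩ := this
      refine ⟨L, by simpa using hL, ?_⟩
      intro t ht hνt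
      exact hLsat ((sat_clauseFormula _ L).2 ⟨t, ht, hνt⟩)
    classical
    set z : B → Finset B := fun r =>
      if hr : ∃ L ∈ G, ∀ t ∈ L, ¬ ν (r * t) then hr.choose else ∅ with hzdef
    have hzG : ∀ r ∈ K, z r ∈ G := by
      intro r hr
      have hex := key r hr
      simp only [hzdef, dif_pos hex]
      exact hex.choose_spec.1
    have hzbad : ∀ r ∈ K, ∀ t ∈ z r, ¬ ν (r * t) := by
      intro r hr
      have hex := key r hr
      simp only [hzdef, dif_pos hex]
      exact hex.choose_spec.2
    obtain ⟨b, hb, hνb⟩ := h _ ⟨K, hK, z, hzG, rfl⟩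
    obtain ⟨r, hr, hbmem⟩ := Finset.mem_biUnion.1 hb
    obtain ⟨t, ht, rfl⟩ := Finset.mem_image.1 hbmem
    exact hzbad r hr t ht hνb
end

section
/- The ordering ⋖ on finite sequences of natural numbers, defined by v ⋖ w iff there exist decompositions v = x y z and w = x i z where i > 0 is a single positive number and y is a (possibly empty) sequence of numbers all strictly smaller than i, is well-founded, and its minimal elements are exactly the sequences consisting only of zeros. -/
/-- The ordering `⋖` on finite sequences of naturals: `v ⋖ w` iff `v = x y z`
and `w = x i z` where `i > 0` is a single positive number and every entry of
`y` is strictly smaller than `i`. -/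
def seqLt (v w : List ℕ) : Prop :=
  ∃ (x y z : List ℕ) (i : ℕ),
    v = x ++ y ++ z ∧ w = x ++ [i] ++ z ∧ 0 < i ∧ ∀ n ∈ y, n < i

/-- The multiset of entries of a list, as a finitely supported count function. -/
noncomputable def seqMeasure (l : List ℕ) : ℕ →₀ ℕ :=
  Multiset.toFinsupp (l : Multiset ℕ)

lemma seqMeasure_apply (l : List ℕ) (a : ℕ) : seqMeasure l a = l.count a := by
  simp [seqMeasure]

lemma seqLt_measure {v w : List ℕ} (h : seqLt v w) :
    Finsupp.Lex (· > ·) (· < ·) (seqMeasure v) (seqMeasure w) := by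
  obtain ⟨x, y, z, i, hv, hw, hi, hy⟩ := h
  refine ⟨i, fun k hk => ?_, ?_⟩
  · subst hv hw
    simp only [seqMeasure_apply, List.count_append]
    have h1 : y.count k = 0 := by
      rw [List.count_eq_zero]
      intro hkm
      exact absurd (hy k hkm) (by omega)
    have h2 : [i].count k = 0 := by
      rw [List.count_eq_zero]
      simp only [List.mem_singleton]
      omega
    omega
  · subst hv hw
    simp only [seqMeasure_apply, List.count_append]
    have h1 : y.count i = 0 := by
      rw [List.count_eq_zero]
      intro hkm
      exact absurd (hy i hkm) (by omega)
    have h2 : [i].count i = 1 := by simp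
    omega

lemma seqLt_wf : WellFounded seqLt := by
  have hwf : WellFounded (Finsupp.Lex (· > · : ℕ → ℕ → Prop) (· < · : ℕ → ℕ → Prop)) :=
    Finsupp.Lex.wellFounded' (fun n => Nat.not_lt_zero n) (Nat.lt_wfRel.wf)
      (Nat.lt_wfRel.wf)
  exact Subrelation.wf (fun h => seqLt_measure h) (InvImage.wf seqMeasure hwf)

/-- `⋖` is well-founded, and its minimal elements are exactly the sequences
consisting only of zeros. -/
theorem seqLt_wellFounded_and_minimal :
    WellFounded seqLt ∧
    ∀ v : List ℕ, (∀ u : List ℕ, ¬ seqLt u v) ↔ (∀ n ∈ v, n = 0) := by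
  refine ⟨seqLt_wf, fun v => ⟨fun hmin n hn => ?_, fun hzero u hu => ?_⟩⟩
  · by_contra hne
    obtain ⟨x, z, rfl⟩ := List.append_of_mem hn
    exact hmin (x ++ z) ⟨x, [], z, n, by simp, by simp, Nat.pos_of_ne_zero hne, by simp⟩
  · obtain ⟨x, y, z, i, hu', hv, hi, hy⟩ := hu
    have : i ∈ v := by rw [hv]; simp
    exact absurd (hzero i this) (by omega)
end
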